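/- arXiv:0903.5316 — 2 statements merged into one kernel-verified Lean document; each statement's English description precedes it below -/
import Mathlib

section
/- The Thue–Morse sequence contains no factor of the form a·u·a·u·a, where a is a single letter and u is a (possibly empty) word. -/
/-- The word `u` occurs in the sequence `x` at position `i`. -/
def occursAt {A : Type*} (x : ℕ → A) (u : List A) (i : ℕ) : Prop :=
  ∀ j : Fin u.length, x (i + (j : ℕ)) = u.get j

open Fin.NatCast in
/-- The Thue–Morse sequence: parity of the binary digit sum. -/
def thue (n : ℕ) : Fin 2 := ((Nat.digits 2 n).sum : Fin 2)

/-!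
An occurrence of `a·u·a·u·a` is a factor `t(i) ⋯ t(i + 2n)` with period `n = |a·u| ≥ 1`; we show
by strong induction on `n` that `t` has no such factor. Since `t(2k) = t(k)` and
`t(2k + 1) = t(k) + 1`, an even period `2m` on a factor descends to the period `m` on a factor of
`t` itself. An odd period `2m + 1 ≥ 3` maps each pair `(2k + 1, 2k + 2)` inside the factor onto an
aligned pair `(2p, 2p + 1)`, whose letters always differ, so `t(2k + 1) ≠ t(2k + 2)`, i.e.
`t(k) = t(k + 1)`, for two consecutive `k`; this gives a cube `aaa`, and so does the period `1`.
But `t` has no cube `aaa`, since among three consecutive positions two form an aligned pair.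
-/

theorem occursAt_append {A : Type*} {x : ℕ → A} {s t : List A} {i : ℕ} :
    occursAt x (s ++ t) i ↔ occursAt x s i ∧ occursAt x t (i + s.length) := by
  simp only [occursAt, List.get_eq_getElem, Fin.forall_iff, List.length_append]
  refine ⟨fun h => ⟨fun j hj => ?_, fun j hj => ?_⟩, fun ⟨hs, ht⟩ j hj => ?_⟩
  · rw [h j (by omega), List.getElem_append_left hj]
  · rw [add_assoc, h _ (by omega), List.getElem_append_right (by omega)]
    simp
  · rcases lt_or_ge j s.length with hjs | hjs
    · rw [hs j hjs, List.getElem_append_left hjs]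
    · rw [List.getElem_append_right hjs, ← ht (j - s.length) (by omega)]
      congr 1; omega

theorem thue_two_mul (n : ℕ) : thue (2 * n) = thue n := by
  rcases n.eq_zero_or_pos with rfl | hn
  · rfl
  · simp [thue, Nat.digits_def' one_lt_two (by omega : 0 < 2 * n)]

open Fin.NatCast in
theorem thue_two_mul_add_one (n : ℕ) : thue (2 * n + 1) = thue n + 1 := by
  rw [thue, Nat.digits_def' one_lt_two (by omega), show (2 * n + 1) / 2 = n by omega,
    show (2 * n + 1) % 2 = 1 by omega, List.sum_cons,
    Nat.cast_add, Nat.cast_one, add_comm, thue]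

theorem thue_two_mul_ne_two_mul_add_one (n : ℕ) : thue (2 * n) ≠ thue (2 * n + 1) := by
  rw [thue_two_mul, thue_two_mul_add_one]
  generalize thue n = a
  revert a; decide

theorem thue_eq_of_two_mul_add {a b r : ℕ} (hr : r < 2) (h : thue (2 * a + r) = thue (2 * b + r)) :
    thue a = thue b := by
  interval_cases r
  · simpa only [add_zero, thue_two_mul] using h
  · simpa only [thue_two_mul_add_one, add_left_inj] using h

theorem thue_eq_thue_succ_of_ne {k : ℕ} (h : thue (2 * k + 1) ≠ thue (2 * k + 2)) :
    thue k = thue (k + 1) := by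
  rw [thue_two_mul_add_one, show 2 * k + 2 = 2 * (k + 1) by ring, thue_two_mul] at h
  generalize thue k = a, thue (k + 1) = b at *
  revert a b; decide

theorem thue_not_three_equal (m : ℕ) : ¬ (thue m = thue (m + 1) ∧ thue (m + 1) = thue (m + 2)) := by
  rintro ⟨h₁, h₂⟩
  obtain ⟨k, rfl | rfl⟩ := m.even_or_odd'
  · exact thue_two_mul_ne_two_mul_add_one k h₁
  · exact thue_two_mul_ne_two_mul_add_one (k + 1) h₂

/-- `x i ⋯ x (i + 2 * n)` has period `n`. -/
def IsOverlapAt {A : Type*} (x : ℕ → A) (i n : ℕ) : Prop :=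
  ∀ j ≤ n, x (i + j) = x (i + n + j)

theorem isOverlapAt_of_occursAt {A : Type*} {x : ℕ → A} {a : A} {u : List A} {i : ℕ}
    (h : occursAt x ([a] ++ u ++ [a] ++ u ++ [a]) i) : IsOverlapAt x i (u.length + 1) := by
  have first : occursAt x (a :: u ++ [a]) i := by
    rw [show [a] ++ u ++ [a] ++ u ++ [a] = (a :: u ++ [a]) ++ (u ++ [a]) by simp] at h
    exact (occursAt_append.1 h).1
  have second : occursAt x (a :: u ++ [a]) (i + (u.length + 1)) := by
    rw [show [a] ++ u ++ [a] ++ u ++ [a] = (a :: u) ++ (a :: u ++ [a]) by simp] at h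
    exact (occursAt_append.1 h).2
  intro j hj
  have hj' : j < (a :: u ++ [a]).length := by simp; omega
  exact (first ⟨j, hj'⟩).trans (second ⟨j, hj'⟩).symm

theorem IsOverlapAt.thue_half {i m : ℕ} (h : IsOverlapAt thue i (2 * m)) :
    IsOverlapAt thue (i / 2) m := by
  intro j hj
  refine thue_eq_of_two_mul_add (Nat.mod_lt i two_pos) ?_
  convert h (2 * j) (by omega) using 2 <;> omega

theorem IsOverlapAt.apply_add {A : Type*} {x : ℕ → A} {i n p : ℕ} (h : IsOverlapAt x i n)
    (hp₁ : i ≤ p) (hp₂ : p ≤ i + n) : x p = x (p + n) := by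
  convert h (p - i) (by omega) using 2 <;> omega

theorem IsOverlapAt.thue_eq_thue_succ {i m k : ℕ} (h : IsOverlapAt thue i (2 * m + 1))
    (hk₁ : i ≤ 2 * k + 1) (hk₂ : 2 * k + 2 ≤ i + 2 * (2 * m + 1)) : thue k = thue (k + 1) := by
  apply thue_eq_thue_succ_of_ne
  by_cases hc : 2 * k + 1 < i + (2 * m + 1)
  · rw [h.apply_add hk₁ hc.le, h.apply_add (p := 2 * k + 2) (by omega) (by omega),
      show 2 * k + 1 + (2 * m + 1) = 2 * (k + m + 1) by ring,
      show 2 * k + 2 + (2 * m + 1) = 2 * (k + m + 1) + 1 by ring]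
    exact thue_two_mul_ne_two_mul_add_one _
  · rw [show 2 * k + 1 = 2 * (k - m) + (2 * m + 1) by omega,
      show 2 * k + 2 = 2 * (k - m) + 1 + (2 * m + 1) by omega,
      ← h.apply_add (by omega) (by omega), ← h.apply_add (by omega) (by omega)]
    exact thue_two_mul_ne_two_mul_add_one _

theorem not_isOverlapAt_thue {i n : ℕ} (hn : 0 < n) : ¬ IsOverlapAt thue i n := by
  induction n using Nat.strong_induction_on generalizing i with
  | _ n ih =>
  intro h
  obtain ⟨m, rfl | rfl⟩ := n.even_or_odd'
  · exact ih m (by omega) (by omega) h.thue_half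
  · rcases m.eq_zero_or_pos with rfl | hm
    · exact thue_not_three_equal i ⟨h 0 (by omega), h 1 (by omega)⟩
    · exact thue_not_three_equal (i / 2)
        ⟨h.thue_eq_thue_succ (by omega) (by omega), h.thue_eq_thue_succ (by omega) (by omega)⟩

/-- The Thue–Morse sequence contains no factor of the form `a·u·a·u·a`. -/
theorem thue_no_auaua :
    ¬ ∃ (a : Fin 2) (u : List (Fin 2)) (i : ℕ),
      occursAt thue ([a] ++ u ++ [a] ++ u ++ [a]) i := by
  rintro ⟨a, u, i, h⟩
  exact not_isOverlapAt_thue u.length.succ_pos (isOverlapAt_of_occursAt h)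
end

section
/- The Thue–Morse sequence is almost periodic (uniformly recurrent): for every factor u of t there exists l such that every window of length l in t contains an occurrence of u. -/
/-- A sequence is almost periodic (uniformly recurrent) if every factor
occurs in every sufficiently long window. -/
def AlmostPeriodic {A : Type*} (x : ℕ → A) : Prop :=
  ∀ u : List A, (∃ i, occursAt x u i) →
    ∃ l : ℕ, ∀ i : ℕ, ∃ j : ℕ, i ≤ j ∧ j + u.length ≤ i + l ∧ occursAt x u j

/-!
If `u` occurs at `i` and `i + |u| ≤ 2^m`, then `u` occurs at `k * 2^m + i` whenever `t k = 0`,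
because the binary expansion of `k * 2^m + r` with `r < 2^m` is that of `r`, padded with zeros,
followed by that of `k`. Of `t (2n)` and `t (2n + 1)` one is `0`, so such `k` occur with gaps at
most `2`, and every window of length `4 · 2^m` contains an occurrence of `u`.
-/

theorem exists_window_of_syndetic_blocks {A : Type*} {x : ℕ → A} {u : List A} {N i g : ℕ}
    (hN : 0 < N) (hiN : i + u.length ≤ N)
    (hocc : ∀ q, ∃ k, q ≤ k ∧ k ≤ q + g ∧ occursAt x u (k * N + i)) :
    ∃ l, ∀ s, ∃ j, s ≤ j ∧ j + u.length ≤ s + l ∧ occursAt x u j := by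
  refine ⟨(g + 2) * N, fun s => ?_⟩
  obtain ⟨k, hqk, hkq, hk⟩ := hocc (s / N + 1)
  refine ⟨k * N + i, ?_, ?_, hk⟩
  · have : s < (s / N + 1) * N := by rw [add_one_mul]; exact Nat.lt_div_mul_add hN
    nlinarith
  · have : s / N * N ≤ s := Nat.div_mul_le_self s N
    nlinarith

theorem thue_add_two_pow_mul {m r : ℕ} (hr : r < 2 ^ m) (k : ℕ) :
    thue (r + 2 ^ m * k) = thue r + thue k := by
  rcases Nat.eq_zero_or_pos k with rfl | hk
  · simp [thue]
  have hlen : (Nat.digits 2 r).length ≤ m := (Nat.digits_length_le_iff one_lt_two r).2 hr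
  have hdigits := Nat.digits_append_zeroes_append_digits (k := m - (Nat.digits 2 r).length)
    (n := r) one_lt_two hk
  rw [Nat.add_sub_cancel' hlen] at hdigits
  simp only [thue, ← hdigits, List.sum_append, List.sum_replicate, smul_zero, add_zero]
  ext
  simp [Fin.val_add]

theorem thue_two_mul_eq_zero_or (n : ℕ) : thue (2 * n) = 0 ∨ thue (2 * n + 1) = 0 := by
  have heven : thue (2 * n) = thue n := by
    simpa [thue] using thue_add_two_pow_mul (m := 1) (r := 0) (by norm_num) n
  have hodd : thue (2 * n + 1) = thue n + 1 := by
    simpa [thue, add_comm] using thue_add_two_pow_mul (m := 1) (r := 1) (by norm_num) n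
  rw [heven, hodd]
  generalize thue n = a
  fin_cases a <;> decide

theorem exists_thue_eq_zero_of_le (q : ℕ) : ∃ k, q ≤ k ∧ k ≤ q + 2 ∧ thue k = 0 := by
  rcases thue_two_mul_eq_zero_or ((q + 1) / 2) with h | h
  · exact ⟨_, by omega, by omega, h⟩
  · exact ⟨_, by omega, by omega, h⟩

theorem occursAt_thue_mul_two_pow_add {u : List (Fin 2)} {i m k : ℕ}
    (hu : occursAt thue u i) (him : i + u.length ≤ 2 ^ m) (hk : thue k = 0) :
    occursAt thue u (k * 2 ^ m + i) := fun j => by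
  rw [add_assoc, add_comm, mul_comm, thue_add_two_pow_mul (by omega), hk, add_zero]
  exact hu j

/-- The Thue–Morse sequence is almost periodic. -/
theorem thue_almostPeriodic : AlmostPeriodic thue := by
  rintro u ⟨i, hu⟩
  have him : i + u.length ≤ 2 ^ (i + u.length) := Nat.lt_two_pow_self.le
  refine exists_window_of_syndetic_blocks (g := 2) (Nat.two_pow_pos _) him fun q => ?_
  obtain ⟨k, hqk, hkq, hk⟩ := exists_thue_eq_zero_of_le q
  exact ⟨k, hqk, hkq, occursAt_thue_mul_two_pow_add hu him hk⟩
end
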